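/- arXiv:2201.04553 — 5 statements merged into one kernel-verified Lean document; each statement's English description precedes it below -/
import Mathlib

section
/- Let f be a CAR family on H with parity operator P, and assume f is full. Let j : Fin N and let W be a unitary on H such that W * P = P * W, W * f j = f j * W, and W * Adjoint(f j) = Adjoint(f j) * W. Then W belongs to the subalgebra Algebra.adjoin ℂ {f i, Adjoint(f i) : i ≠ j}. -/
/-!
Write `a = f j` and let `s` be the product over `k ≠ j` of the mode signs `1 - 2 (f k)† f k`.
It lies in the algebra `B` generated by the other modes, squares to `1`, commutes with `a` and
anticommutes with the other modes. Hence `a a†, s a, s a†, a† a` form a system of `2 × 2` matrix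
units commuting with `B`, and as `a = s (s a)` they generate everything together with `B`: every
operator is `∑ b_ik e_ik` with `b_ik ∈ B`. The map `x ↦ e₀₀ x e₀₀ + (P a†) x (a P)` is left
`B`-linear (`P a†` commutes with `B`) and sends `∑ b_ik e_ik` to `b₀₀`, while it fixes `W`, which
commutes with `a a†` and `P a†`. So `W = b₀₀ ∈ B`.
-/

def AntiCommute {A : Type*} [Mul A] [Neg A] (x y : A) : Prop := x * y = -(y * x)

namespace AntiCommute

variable {A : Type*} [Ring A] {x y z : A}

theorem symm (h : AntiCommute x y) : AntiCommute y x := by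
  rw [AntiCommute, h, neg_neg]

theorem of_add_eq_zero (h : x * y + y * x = 0) : AntiCommute x y :=
  eq_neg_of_add_eq_zero_left h

theorem mul_right (hy : AntiCommute x y) (hz : AntiCommute x z) : Commute x (y * z) := by
  rw [Commute, SemiconjBy, ← mul_assoc, hy, neg_mul, mul_assoc, hz, mul_neg, neg_neg, mul_assoc]

theorem mul_left (hx : AntiCommute x z) (hy : AntiCommute y z) : Commute (x * y) z :=
  (hx.symm.mul_right hy.symm).symm

theorem mul_commute_left (hx : AntiCommute x z) (hy : Commute y z) : AntiCommute (x * y) z := by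
  rw [AntiCommute, mul_assoc, hy.eq, ← mul_assoc, hx, neg_mul, mul_assoc]

theorem star [StarRing A] (h : AntiCommute x y) : AntiCommute (star x) (star y) := by
  rw [AntiCommute, ← star_mul, ← star_mul, h, star_neg, neg_neg]

end AntiCommute

theorem Algebra.commute_mul_of_forall_anticommute {R A : Type*} [CommRing R] [Ring A]
    [Algebra R A] {s : Set A} {x y b : A} (hx : ∀ g ∈ s, AntiCommute x g)
    (hy : ∀ g ∈ s, AntiCommute y g) (hb : b ∈ Algebra.adjoin R s) : Commute b (x * y) :=
  (Algebra.commute_of_mem_adjoin_of_forall_mem_commute hb fun g hg =>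
    (hx g hg).mul_left (hy g hg)).symm

section MatrixUnits

variable {R A n : Type*} [CommSemiring R] [Semiring A] [Algebra R A] [Fintype n] [DecidableEq n]

structure IsMatrixUnits (e : n → n → A) : Prop where
  mul_eq : ∀ i j k l, e i j * e k l = if j = k then e i l else 0
  sum_diag : ∑ i, e i i = 1

namespace IsMatrixUnits

variable {e : n → n → A} (he : IsMatrixUnits e) {B : Subalgebra R A}
include he

theorem exists_eq_sum_of_mem_adjoin (hB : ∀ b ∈ B, ∀ i k, Commute b (e i k)) {x : A}
    (hx : x ∈ Algebra.adjoin R ((B : Set A) ∪ Set.range (Function.uncurry e))) :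
    ∃ b : n → n → A, (∀ i k, b i k ∈ B) ∧ x = ∑ i, ∑ k, b i k * e i k := by
  have hdiag : ∀ y ∈ B, ∃ b : n → n → A, (∀ i k, b i k ∈ B) ∧ y = ∑ i, ∑ k, b i k * e i k :=
    fun y hy => ⟨fun i k => if i = k then y else 0,
      fun i k => by dsimp only; split_ifs; exacts [hy, B.zero_mem],
      by simp [ite_mul, ← Finset.mul_sum, he.sum_diag]⟩
  induction hx using Algebra.adjoin_induction with
  | mem y hy =>
    rcases hy with hy | ⟨⟨p, q⟩, rfl⟩
    · exact hdiag y hy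
    · refine ⟨fun i k => if i = p ∧ k = q then 1 else 0,
        fun i k => by dsimp only; split_ifs <;> simp, ?_⟩
      simp [ite_mul, ite_and]
  | algebraMap r => exact hdiag _ (B.algebraMap_mem r)
  | add x y _ _ hx hy =>
    obtain ⟨b, hb, rfl⟩ := hx
    obtain ⟨c, hc, rfl⟩ := hy
    exact ⟨b + c, fun i k => add_mem (hb i k) (hc i k), by simp [add_mul, Finset.sum_add_distrib]⟩
  | mul x y _ _ hx hy =>
    obtain ⟨b, hb, rfl⟩ := hx
    obtain ⟨c, hc, rfl⟩ := hy
    refine ⟨fun i l => ∑ k, b i k * c k l,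
      fun i l => sum_mem fun k _ => mul_mem (hb i k) (hc k l), ?_⟩
    have hprod : ∀ i k j l, b i k * e i k * (c j l * e j l)
        = if k = j then b i k * c k l * e i l else 0 := by
      intro i k j l
      rw [mul_assoc, ← mul_assoc (e i k), ← (hB _ (hc j l) i k).eq, mul_assoc, he.mul_eq,
        ← mul_assoc]
      split_ifs with h <;> simp [h]
    simp_rw [Finset.sum_mul, Finset.mul_sum, hprod, Finset.sum_ite_irrel, Finset.sum_const_zero,
      Finset.sum_ite_eq, Finset.mem_univ, if_true]
    exact Finset.sum_congr rfl fun i _ => Finset.sum_comm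

variable {Q : n → A} (hQ : ∀ m, Q m * e m m * Q m = e m m) (r : n)
include hQ

theorem sum_conj_mul_mul (i k : n) :
    ∑ m, Q m * e m r * e i k * (e r m * Q m) = if i = r ∧ k = r then 1 else 0 := by
  have h : ∀ m, Q m * e m r * e i k * (e r m * Q m) = if i = r ∧ k = r then e m m else 0 := by
    intro m
    rw [mul_assoc (Q m), he.mul_eq]
    by_cases hi : r = i
    · subst hi
      rw [if_pos rfl, ← mul_assoc, mul_assoc (Q m), he.mul_eq]
      by_cases hk : k = r
      · simp [hk, hQ]
      · simp [hk]
    · simp [hi, Ne.symm hi]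
  simp_rw [h, Finset.sum_ite_irrel, Finset.sum_const_zero, he.sum_diag]

theorem sum_conj_mul : ∑ m, Q m * e m r * (e r m * Q m) = 1 := by
  simpa [mul_assoc, he.mul_eq] using he.sum_conj_mul_mul hQ r r r

theorem sum_conj_mul_mul_mem (hB : ∀ b ∈ B, ∀ i k, Commute b (e i k))
    (hQB : ∀ m, ∀ b ∈ B, Commute b (Q m)) {x : A}
    (hx : x ∈ Algebra.adjoin R ((B : Set A) ∪ Set.range (Function.uncurry e))) :
    ∑ m, Q m * e m r * x * (e r m * Q m) ∈ B := by
  obtain ⟨b, hb, rfl⟩ := he.exists_eq_sum_of_mem_adjoin hB hx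
  have h : ∀ m i k, Q m * e m r * (b i k * e i k) * (e r m * Q m)
      = b i k * (Q m * e m r * e i k * (e r m * Q m)) := by
    intro m i k
    rw [← mul_assoc (Q m * e m r), ← ((hQB m _ (hb i k)).mul_right (hB _ (hb i k) m r)).eq]
    simp only [mul_assoc]
  simp_rw [Finset.mul_sum, Finset.sum_mul, h]
  rw [Finset.sum_comm]
  refine sum_mem fun i _ => ?_
  rw [Finset.sum_comm]
  refine sum_mem fun k _ => ?_
  rw [← Finset.mul_sum, he.sum_conj_mul_mul hQ]
  split_ifs
  · simpa using hb i k
  · simp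

end IsMatrixUnits
end MatrixUnits

section FermionMode

variable {A : Type*} [Ring A]

structure IsFermionMode (a c : A) : Prop where
  mul_self_left : a * a = 0
  mul_self_right : c * c = 0
  add_eq_one : a * c + c * a = 1

namespace IsFermionMode

variable {a c : A} (h : IsFermionMode a c)
include h

theorem symm : IsFermionMode c a :=
  ⟨h.mul_self_right, h.mul_self_left, by rw [add_comm, h.add_eq_one]⟩

theorem mul_mul_self : a * c * a = a :=
  calc a * c * a = (a * c + c * a) * a := by
        rw [add_mul, mul_assoc c, h.mul_self_left, mul_zero, add_zero]
    _ = a := by rw [h.add_eq_one, one_mul]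

theorem mul_mul_mul_self (x : A) : x * a * c * a = x * a := by
  rw [mul_assoc x, mul_assoc x, h.mul_mul_self]

theorem mul_mul_self_left (x : A) : x * a * a = 0 := by
  rw [mul_assoc, h.mul_self_left, mul_zero]

theorem anticommute_sub_left : AntiCommute (a * c - c * a) a := by
  simp only [AntiCommute, sub_mul, mul_sub, ← mul_assoc, h.mul_mul_self, h.mul_self_left,
    h.mul_mul_self_left, zero_mul, sub_zero, zero_sub, neg_neg]

theorem anticommute_sub_right : AntiCommute (a * c - c * a) c := by
  have := h.symm.anticommute_sub_left
  rwa [← neg_sub, AntiCommute, neg_mul, mul_neg, neg_inj] at this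

theorem sub_mul_self : (a * c - c * a) * (a * c - c * a) = 1 := by
  simp only [sub_mul, mul_sub, ← mul_assoc, h.mul_mul_self, h.symm.mul_mul_self,
    h.mul_mul_self_left, h.symm.mul_mul_self_left, sub_zero, zero_sub, neg_mul, sub_neg_eq_add]
  exact h.add_eq_one

theorem isMatrixUnits {s : A} (hs : s * s = 1) (hsa : Commute s a) (hsc : Commute s c) :
    IsMatrixUnits ![![a * c, s * a], ![s * c, c * a]] := by
  have ha : ∀ x, x * a * s = x * s * a := fun x => by rw [mul_assoc, ← hsa.eq, mul_assoc]
  have hc : ∀ x, x * c * s = x * s * c := fun x => by rw [mul_assoc, ← hsc.eq, mul_assoc]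
  refine ⟨fun i j k l => ?_, by simpa using h.add_eq_one⟩
  fin_cases i <;> fin_cases j <;> fin_cases k <;> fin_cases l <;>
    simp [← mul_assoc, ha, hc, hs, hsa.symm.eq, hsc.symm.eq, h.mul_mul_self,
      h.symm.mul_mul_self, h.mul_mul_mul_self, h.symm.mul_mul_mul_self, h.mul_mul_self_left,
      h.symm.mul_mul_self_left, h.mul_self_left, h.mul_self_right]

end IsFermionMode
end FermionMode

section CAR

variable {A ι : Type*} [Ring A] [StarRing A] [DecidableEq ι]

-- The sign `(-1) ^ (star x * x) = 1 - 2 * star x * x` of a mode, written without the `2`.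
def modeParity (x : A) : A := x * star x - star x * x

structure IsCAR (a : ι → A) : Prop where
  anticomm : ∀ i j, a i * a j + a j * a i = 0
  anticomm_star : ∀ i j, a i * star (a j) + star (a j) * a i = if i = j then 1 else 0

namespace IsCAR

variable {a : ι → A} (ha : IsCAR a)
include ha

theorem anticommute (i j : ι) : AntiCommute (a i) (a j) :=
  .of_add_eq_zero (ha.anticomm i j)

theorem anticommute_star {i j : ι} (hij : i ≠ j) : AntiCommute (a i) (star (a j)) :=
  .of_add_eq_zero (by rw [ha.anticomm_star, if_neg hij])

theorem star_anticommute_star (i j : ι) : AntiCommute (star (a i)) (star (a j)) :=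
  (ha.anticommute i j).star

theorem isFermionMode [IsAddTorsionFree A] (i : ι) : IsFermionMode (a i) (star (a i)) := by
  have hsq : a i * a i = 0 := two_nsmul_eq_zero.mp (by rw [two_nsmul, ha.anticomm])
  refine ⟨hsq, ?_, by simpa using ha.anticomm_star i i⟩
  rw [← star_mul, hsq, star_zero]

theorem pairwise_commute_modeParity :
    Pairwise fun k l => Commute (modeParity (a k)) (modeParity (a l)) := by
  intro k l hkl
  have h₁ : Commute (a k) (modeParity (a l)) :=
    ((ha.anticommute k l).mul_right (ha.anticommute_star hkl)).sub_right
      ((ha.anticommute_star hkl).mul_right (ha.anticommute k l))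
  have h₂ : Commute (star (a k)) (modeParity (a l)) :=
    ((ha.anticommute_star hkl.symm).symm.mul_right (ha.star_anticommute_star k l)).sub_right
      ((ha.star_anticommute_star k l).mul_right (ha.anticommute_star hkl.symm).symm)
  exact (h₁.mul_left h₂).sub_left (h₂.mul_left h₁)

def parity (s : Finset ι) : A :=
  s.noncommProd (fun k => modeParity (a k)) (ha.pairwise_commute_modeParity.set_pairwise _)

theorem commute_parity {s : Finset ι} {x : A}
    (hx : ∀ k ∈ s, AntiCommute x (a k) ∧ AntiCommute x (star (a k))) :
    Commute x (ha.parity s) :=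
  Finset.noncommProd_commute _ _ _ _ fun k hk =>
    ((hx k hk).1.mul_right (hx k hk).2).sub_right ((hx k hk).2.mul_right (hx k hk).1)

theorem commute_parity_of_notMem {s : Finset ι} {i : ι} (hi : i ∉ s) :
    Commute (a i) (ha.parity s) ∧ Commute (star (a i)) (ha.parity s) := by
  have hne : ∀ k ∈ s, i ≠ k := fun k hk h => hi (h ▸ hk)
  exact ⟨ha.commute_parity fun k hk => ⟨ha.anticommute i k, ha.anticommute_star (hne k hk)⟩,
    ha.commute_parity fun k hk =>
      ⟨(ha.anticommute_star (hne k hk).symm).symm, ha.star_anticommute_star i k⟩⟩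

theorem anticommute_parity [IsAddTorsionFree A] {s : Finset ι} {i : ι} (hi : i ∈ s) :
    AntiCommute (ha.parity s) (a i) ∧ AntiCommute (ha.parity s) (star (a i)) := by
  have hsplit :=
    Finset.mul_noncommProd_erase s hi _ (ha.pairwise_commute_modeParity.set_pairwise _)
  obtain ⟨h₁, h₂⟩ := ha.commute_parity_of_notMem (s.notMem_erase i)
  rw [parity, ← hsplit]
  exact ⟨(ha.isFermionMode i).anticommute_sub_left.mul_commute_left h₁.symm,
    (ha.isFermionMode i).anticommute_sub_right.mul_commute_left h₂.symm⟩

theorem parity_mul_self [IsAddTorsionFree A] (s : Finset ι) : ha.parity s * ha.parity s = 1 := by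
  rw [parity, ← Finset.noncommProd_mul_distrib, Finset.noncommProd_eq_pow_card _ _ _ 1, one_pow]
  · exact fun k _ => (ha.isFermionMode k).sub_mul_self
  · exact ha.pairwise_commute_modeParity.set_pairwise _

theorem parity_mem {R : Type*} [CommRing R] [Algebra R A] {B : Subalgebra R A} {s : Finset ι}
    (hB : ∀ k ∈ s, a k ∈ B ∧ star (a k) ∈ B) : ha.parity s ∈ B :=
  Submonoid.noncommProd_mem B.toSubmonoid _ _ _ fun k hk => show modeParity (a k) ∈ B from
    sub_mem (mul_mem (hB k hk).1 (hB k hk).2) (mul_mem (hB k hk).2 (hB k hk).1)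

end IsCAR

end CAR

section Complement

variable {A ι : Type*} [Ring A] [StarRing A] [DecidableEq ι] {a : ι → A}

def otherModes (a : ι → A) (j : ι) : Set A := {x | ∃ i, i ≠ j ∧ (x = a i ∨ x = star (a i))}

namespace IsCAR

variable (ha : IsCAR a) (j : ι)
include ha

theorem anticommute_otherModes :
    ∀ g ∈ otherModes a j, AntiCommute (a j) g ∧ AntiCommute (star (a j)) g := by
  rintro g ⟨i, hij, rfl | rfl⟩
  exacts [⟨ha.anticommute j i, (ha.anticommute_star hij).symm⟩,
    ⟨ha.anticommute_star hij.symm, ha.star_anticommute_star j i⟩]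

variable [IsAddTorsionFree A] [Fintype ι]

theorem parity_anticommute_otherModes :
    ∀ g ∈ otherModes a j, AntiCommute (ha.parity (Finset.univ.erase j)) g := by
  rintro g ⟨i, hij, rfl | rfl⟩
  exacts [(ha.anticommute_parity (Finset.mem_erase_of_ne_of_mem hij (Finset.mem_univ i))).1,
    (ha.anticommute_parity (Finset.mem_erase_of_ne_of_mem hij (Finset.mem_univ i))).2]

-- The factor `s` makes the off-diagonal units commute with the other modes, and `s * s = 1`
-- keeps `a j = s * (s * a j)` in the algebra they generate together with the units.
def modeUnits : Fin 2 → Fin 2 → A :=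
  let s := ha.parity (Finset.univ.erase j)
  ![![a j * star (a j), s * a j], ![s * star (a j), star (a j) * a j]]

theorem isMatrixUnits_modeUnits : IsMatrixUnits (ha.modeUnits j) := by
  obtain ⟨h₁, h₂⟩ := ha.commute_parity_of_notMem (Finset.notMem_erase j Finset.univ)
  exact (ha.isFermionMode j).isMatrixUnits (ha.parity_mul_self _) h₁.symm h₂.symm

theorem commute_modeUnits {R : Type*} [CommRing R] [Algebra R A] {b : A}
    (hb : b ∈ Algebra.adjoin R (otherModes a j)) (i k : Fin 2) :
    Commute b (ha.modeUnits j i k) := by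
  have h₁ := fun g hg => (ha.anticommute_otherModes j g hg).1
  have h₂ := fun g hg => (ha.anticommute_otherModes j g hg).2
  have hs := ha.parity_anticommute_otherModes j
  fin_cases i <;> fin_cases k
  exacts [Algebra.commute_mul_of_forall_anticommute h₁ h₂ hb,
    Algebra.commute_mul_of_forall_anticommute hs h₁ hb,
    Algebra.commute_mul_of_forall_anticommute hs h₂ hb,
    Algebra.commute_mul_of_forall_anticommute h₂ h₁ hb]

theorem adjoin_modeUnits_eq_top {R : Type*} [CommRing R] [Algebra R A]
    (hfull : Algebra.adjoin R {x | ∃ i, x = a i ∨ x = star (a i)} = ⊤) :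
    Algebra.adjoin R ((Algebra.adjoin R (otherModes a j) : Set A) ∪
      Set.range (Function.uncurry (ha.modeUnits j))) = ⊤ := by
  set B := Algebra.adjoin R (otherModes a j)
  set T := Algebra.adjoin R ((B : Set A) ∪ Set.range (Function.uncurry (ha.modeUnits j)))
  have hB : B ≤ T := fun x hx => Algebra.subset_adjoin (.inl hx)
  have hs : ha.parity (Finset.univ.erase j) ∈ T := hB <| ha.parity_mem fun k hk =>
    ⟨Algebra.subset_adjoin ⟨k, Finset.ne_of_mem_erase hk, .inl rfl⟩,
      Algebra.subset_adjoin ⟨k, Finset.ne_of_mem_erase hk, .inr rfl⟩⟩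
  have hunit : ∀ i k, ha.parity (Finset.univ.erase j) * ha.modeUnits j i k ∈ T :=
    fun i k => mul_mem hs (Algebra.subset_adjoin (.inr ⟨(i, k), rfl⟩))
  have hss := ha.parity_mul_self (Finset.univ.erase j)
  have haj : a j ∈ T := by simpa [modeUnits, ← mul_assoc, hss] using hunit 0 1
  have haj' : star (a j) ∈ T := by simpa [modeUnits, ← mul_assoc, hss] using hunit 1 0
  rw [eq_top_iff, ← hfull, Algebra.adjoin_le_iff]
  rintro x ⟨i, rfl | rfl⟩ <;> obtain rfl | hij := eq_or_ne i j
  exacts [haj, hB (Algebra.subset_adjoin ⟨i, hij, .inl rfl⟩), haj',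
    hB (Algebra.subset_adjoin ⟨i, hij, .inr rfl⟩)]

-- `W` need not commute with the parity `s` of the other modes, but it commutes with
-- `parityTwist P 1 * modeUnits 1 0 = P * star (a j)`; compressing with the twisted units fixes `W`.
def parityTwist (P : A) : Fin 2 → A := ![1, ha.parity (Finset.univ.erase j) * P]

variable {P : A}

section Twist

variable (hP : ∀ i, AntiCommute P (a i) ∧ AntiCommute P (star (a i)))
include hP

theorem parityTwist_conj (hPP : P * P = 1) (m : Fin 2) :
    ha.parityTwist j P m * ha.modeUnits j m m * ha.parityTwist j P m = ha.modeUnits j m m := by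
  set s := ha.parity (Finset.univ.erase j)
  have hPs : Commute P s := ha.commute_parity fun k _ => hP k
  obtain ⟨hsa, hsc⟩ := ha.commute_parity_of_notMem (Finset.notMem_erase j Finset.univ)
  have hsP : s * P * (s * P) = 1 := by
    rw [hPs.mul_mul_mul_comm, ha.parity_mul_self, hPP, one_mul]
  have hc : Commute (s * P) (star (a j) * a j) :=
    (hsc.symm.mul_right hsa.symm).mul_left ((hP j).2.mul_right (hP j).1)
  fin_cases m
  · simp [parityTwist]
  · change s * P * (star (a j) * a j) * (s * P) = star (a j) * a j
    rw [hc.eq, mul_assoc, hsP, mul_one]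

theorem commute_parityTwist {R : Type*} [CommRing R] [Algebra R A] {b : A}
    (hb : b ∈ Algebra.adjoin R (otherModes a j)) (m : Fin 2) :
    Commute b (ha.parityTwist j P m) := by
  fin_cases m
  · exact Commute.one_right b
  · exact Algebra.commute_mul_of_forall_anticommute (ha.parity_anticommute_otherModes j)
      (fun g ⟨i, _, hg⟩ => hg.elim (· ▸ (hP i).1) (· ▸ (hP i).2)) hb

theorem parityTwist_mul_modeUnits :
    ha.parityTwist j P 1 * ha.modeUnits j 1 0 = P * star (a j) := by
  change ha.parity _ * P * (ha.parity _ * star (a j)) = P * star (a j)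
  rw [← (ha.commute_parity fun k _ => hP k).eq, mul_assoc, ← mul_assoc (ha.parity _),
    ha.parity_mul_self, one_mul]

end Twist

theorem mem_adjoin_otherModes_of_commute {R : Type*} [CommRing R] [Algebra R A]
    (hfull : Algebra.adjoin R {x | ∃ i, x = a i ∨ x = star (a i)} = ⊤) (hPP : P * P = 1)
    (hP : ∀ i, AntiCommute P (a i) ∧ AntiCommute P (star (a i))) {W : A} (hWP : Commute W P)
    (hWa : Commute W (a j)) (hWa' : Commute W (star (a j))) :
    W ∈ Algebra.adjoin R (otherModes a j) := by
  set e := ha.modeUnits j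
  set Q := ha.parityTwist j P
  have he := ha.isMatrixUnits_modeUnits j
  have hQ := ha.parityTwist_conj j hP hPP
  have hWQe : ∀ m, Commute W (Q m * e m 0) := by
    intro m
    fin_cases m
    · simpa [Q, e, parityTwist, modeUnits] using hWa.mul_right hWa'
    · change Commute W (Q 1 * e 1 0)
      rw [ha.parityTwist_mul_modeUnits j hP]
      exact hWP.mul_right hWa'
  have hW : W = ∑ m, Q m * e m 0 * W * (e 0 m * Q m) :=
    calc W = W * ∑ m, Q m * e m 0 * (e 0 m * Q m) := by rw [he.sum_conj_mul hQ, mul_one]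
      _ = _ := Finset.mul_sum _ _ _ |>.trans <| Finset.sum_congr rfl fun m _ => by
        rw [← mul_assoc, (hWQe m).eq]
  rw [hW]
  exact he.sum_conj_mul_mul_mem hQ 0 (fun b hb => ha.commute_modeUnits j hb)
    (fun m b hb => ha.commute_parityTwist j hP hb m)
    (by rw [ha.adjoin_modeUnits_eq_top j hfull]; trivial)

end IsCAR
end Complement

open LinearMap

theorem stmt_1_general {H : Type*} [NormedAddCommGroup H] [InnerProductSpace ℂ H]
    [FiniteDimensional ℂ H] {N : ℕ}
    (f : Fin N → (H →ₗ[ℂ] H))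
    (hCAR₁ : ∀ i j, f i * f j + f j * f i = 0)
    (hCAR₂ : ∀ i j, f i * adjoint (f j) + adjoint (f j) * f i
      = if i = j then 1 else 0)
    (P : H →ₗ[ℂ] H)
    (hPuni₁ : adjoint P * P = 1)
    (hPsq : P * P = 1)
    (hPanti : ∀ i, P * f i = -(f i * P))
    (hfull : Algebra.adjoin ℂ
      {A : H →ₗ[ℂ] H | ∃ i : Fin N, A = f i ∨ A = adjoint (f i)} = ⊤)
    (j : Fin N) (W : H →ₗ[ℂ] H)
    (hWP : W * P = P * W)
    (hWf : W * f j = f j * W)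
    (hWfd : W * adjoint (f j) = adjoint (f j) * W) :
    W ∈ Algebra.adjoin ℂ
      {A : H →ₗ[ℂ] H | ∃ i : Fin N, i ≠ j ∧ (A = f i ∨ A = adjoint (f i))} := by
  simp only [← LinearMap.star_eq_adjoint] at *
  have : IsAddTorsionFree (H →ₗ[ℂ] H) := .of_isTorsionFree ℂ _
  have hPstar : star P = P :=
    calc star P = star P * (P * P) := by rw [hPsq, mul_one]
      _ = P := by rw [← mul_assoc, hPuni₁, one_mul]
  have hP (i : Fin N) : AntiCommute P (f i) ∧ AntiCommute P (star (f i)) :=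
    ⟨hPanti i, hPstar ▸ AntiCommute.star (hPanti i)⟩
  exact IsCAR.mem_adjoin_otherModes_of_commute ⟨hCAR₁, hCAR₂⟩ j hfull hPsq hP hWP hWf hWfd

/-- Key step in the backward direction of Theorem 1: a parity-superselected
unitary commuting with the mode-`j` creation and annihilation operators is
local on the complementary modes. -/
theorem stmt_1 {H : Type*} [NormedAddCommGroup H] [InnerProductSpace ℂ H]
    [FiniteDimensional ℂ H] [Nontrivial H] {N : ℕ}
    (f : Fin N → (H →ₗ[ℂ] H))
    (hCAR₁ : ∀ i j, f i * f j + f j * f i = 0)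
    (hCAR₂ : ∀ i j, f i * adjoint (f j) + adjoint (f j) * f i
      = if i = j then 1 else 0)
    (P : H →ₗ[ℂ] H)
    (hPuni₁ : adjoint P * P = 1) (hPuni₂ : P * adjoint P = 1)
    (hPsq : P * P = 1)
    (hPanti : ∀ i, P * f i = -(f i * P))
    (hfull : Algebra.adjoin ℂ
      {A : H →ₗ[ℂ] H | ∃ i : Fin N, A = f i ∨ A = adjoint (f i)} = ⊤)
    (j : Fin N) (W : H →ₗ[ℂ] H)
    (hW₁ : adjoint W * W = 1) (hW₂ : W * adjoint W = 1)
    (hWP : W * P = P * W)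
    (hWf : W * f j = f j * W)
    (hWfd : W * adjoint (f j) = adjoint (f j) * W) :
    W ∈ Algebra.adjoin ℂ
      {A : H →ₗ[ℂ] H | ∃ i : Fin N, i ≠ j ∧ (A = f i ∨ A = adjoint (f i))} :=
  stmt_1_general f hCAR₁ hCAR₂ P hPuni₁ hPsq hPanti hfull j W hWP hWf hWfd
end

section
/- Let f be a CAR family on H and assume f is full. Then for every j : Fin N and every operator W : H →ₗ[ℂ] H there exist O₀, O₁, O₂, O₃ in the subalgebra Algebra.adjoin ℂ {f i, Adjoint(f i) : i ≠ j} such that W = O₀ + f j * O₁ + Adjoint(f j) * O₂ + f j * Adjoint(f j) * O₃. -/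
/-!
Write `a = f j` and `d = adjoint (f j)`, so that `a² = d² = 0` and `a d + d a = 1`, and let `B`
be the algebra generated by the other modes. Every generator of `B` anticommutes with `a` and `d`,
hence every `b ∈ B` can be moved past them at the price of a twist: `b a = a b'` and `b d = d b'`
with `b' ∈ B`. Together with the CAR relations for `a, d` this shows that `B + aB + dB + adB` is
stable under left multiplication by `a`, `d` and `B`, i.e. by the whole algebra, which is
everything by fullness.
-/

open LinearMap

section ModeExpansion

variable {R A : Type*} [CommRing R] [Ring A] [Algebra R A]

theorem exists_mul_eq_mul_of_mem_adjoin_of_anticomm {S T : Set A}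
    (hST : ∀ g ∈ S, ∀ c ∈ T, g * c = -(c * g)) {x : A} (hx : x ∈ Algebra.adjoin R S) :
    ∃ y ∈ Algebra.adjoin R S, ∀ c ∈ T, x * c = c * y := by
  induction hx using Algebra.adjoin_induction with
  | mem g hg =>
    exact ⟨-g, neg_mem (Algebra.subset_adjoin hg), fun c hc => by rw [hST g hg c hc, mul_neg]⟩
  | algebraMap r =>
    exact ⟨algebraMap R A r, Subalgebra.algebraMap_mem _ r, fun c _ => Algebra.commutes r c⟩
  | add x y _ _ ihx ihy =>
    obtain ⟨x', hx', hx⟩ := ihx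
    obtain ⟨y', hy', hy⟩ := ihy
    exact ⟨x' + y', add_mem hx' hy', fun c hc => by rw [add_mul, mul_add, hx c hc, hy c hc]⟩
  | mul x y _ _ ihx ihy =>
    obtain ⟨x', hx', hx⟩ := ihx
    obtain ⟨y', hy', hy⟩ := ihy
    exact ⟨x' * y', mul_mem hx' hy', fun c hc => by
      rw [mul_assoc, hy c hc, ← mul_assoc, hx c hc, mul_assoc]⟩

def HasModeExpansion (B : Subalgebra R A) (a d x : A) : Prop :=
  ∃ b₀ ∈ B, ∃ b₁ ∈ B, ∃ b₂ ∈ B, ∃ b₃ ∈ B, x = b₀ + a * b₁ + d * b₂ + a * d * b₃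

namespace HasModeExpansion

variable {B : Subalgebra R A} {a d x y : A}

theorem of_mem (hx : x ∈ B) : HasModeExpansion B a d x :=
  ⟨x, hx, 0, zero_mem B, 0, zero_mem B, 0, zero_mem B, by simp⟩

theorem add (hx : HasModeExpansion B a d x) (hy : HasModeExpansion B a d y) :
    HasModeExpansion B a d (x + y) := by
  obtain ⟨b₀, hb₀, b₁, hb₁, b₂, hb₂, b₃, hb₃, rfl⟩ := hx
  obtain ⟨c₀, hc₀, c₁, hc₁, c₂, hc₂, c₃, hc₃, rfl⟩ := hy
  exact ⟨b₀ + c₀, add_mem hb₀ hc₀, b₁ + c₁, add_mem hb₁ hc₁, b₂ + c₂, add_mem hb₂ hc₂,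
    b₃ + c₃, add_mem hb₃ hc₃, by noncomm_ring⟩

theorem mul_left_of_mem (hB : ∀ b ∈ B, ∃ b' ∈ B, b * a = a * b' ∧ b * d = d * b')
    {b : A} (hb : b ∈ B) (hx : HasModeExpansion B a d x) : HasModeExpansion B a d (b * x) := by
  obtain ⟨b₀, hb₀, b₁, hb₁, b₂, hb₂, b₃, hb₃, rfl⟩ := hx
  obtain ⟨b', hb', hba, hbd⟩ := hB b hb
  obtain ⟨b'', hb'', -, hbd'⟩ := hB b' hb'
  refine ⟨b * b₀, mul_mem hb hb₀, b' * b₁, mul_mem hb' hb₁, b' * b₂, mul_mem hb' hb₂,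
    b'' * b₃, mul_mem hb'' hb₃, ?_⟩
  have hbad : b * (a * d) = a * d * b'' := by
    rw [← mul_assoc, hba, mul_assoc, hbd', mul_assoc]
  simp only [mul_add, ← mul_assoc, hba, hbd, hbad]

theorem mul_left_of_sq_eq_zero (haa : a * a = 0) (hx : HasModeExpansion B a d x) :
    HasModeExpansion B a d (a * x) := by
  obtain ⟨b₀, hb₀, b₁, hb₁, b₂, hb₂, b₃, hb₃, rfl⟩ := hx
  refine ⟨0, zero_mem B, b₀, hb₀, 0, zero_mem B, b₂, hb₂, ?_⟩
  simp only [mul_add, ← mul_assoc, haa, zero_mul, mul_zero, add_zero, zero_add]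

theorem mul_left_of_car (hdd : d * d = 0) (had : a * d + d * a = 1)
    (hx : HasModeExpansion B a d x) : HasModeExpansion B a d (d * x) := by
  obtain ⟨b₀, hb₀, b₁, hb₁, b₂, hb₂, b₃, hb₃, rfl⟩ := hx
  refine ⟨b₁, hb₁, 0, zero_mem B, b₀ + b₃, add_mem hb₀ hb₃, -b₁, neg_mem hb₁, ?_⟩
  have hda : d * a = 1 - a * d := eq_sub_of_add_eq' had
  have hdad : d * (a * d) = d := by
    rw [← mul_assoc, hda, sub_mul, one_mul, mul_assoc, hdd, mul_zero, sub_zero]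
  simp only [mul_add, ← mul_assoc, hda, hdd, hdad]
  noncomm_ring

end HasModeExpansion

theorem hasModeExpansion_of_mem_adjoin {S : Set A} {a d x : A} (haa : a * a = 0)
    (hdd : d * d = 0) (had : a * d + d * a = 1)
    (hS : ∀ g ∈ S, ∀ c ∈ ({a, d} : Set A), g * c = -(c * g))
    (hx : x ∈ Algebra.adjoin R (insert a (insert d S))) :
    HasModeExpansion (Algebra.adjoin R S) a d x := by
  have hB : ∀ b ∈ Algebra.adjoin R S, ∃ b' ∈ Algebra.adjoin R S, b * a = a * b' ∧ b * d = d * b' :=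
    fun b hb => (exists_mul_eq_mul_of_mem_adjoin_of_anticomm hS hb).imp fun b' ⟨hb', h⟩ =>
      ⟨hb', h a (by simp), h d (by simp)⟩
  suffices ∀ m, HasModeExpansion (Algebra.adjoin R S) a d m →
      HasModeExpansion (Algebra.adjoin R S) a d (x * m) by
    simpa using this 1 (.of_mem (one_mem _))
  induction hx using Algebra.adjoin_induction with
  | mem g hg =>
    rcases hg with rfl | rfl | hg
    · exact fun m => .mul_left_of_sq_eq_zero haa
    · exact fun m => .mul_left_of_car hdd had
    · exact fun m => .mul_left_of_mem hB (Algebra.subset_adjoin hg)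
  | algebraMap r => exact fun m => .mul_left_of_mem hB (Subalgebra.algebraMap_mem _ r)
  | add x y _ _ ihx ihy => exact fun m hm => by rw [add_mul]; exact (ihx m hm).add (ihy m hm)
  | mul x y _ _ ihx ihy => exact fun m hm => by rw [mul_assoc]; exact ihx _ (ihy m hm)

end ModeExpansion

section CAR

variable {A : Type*} [Ring A] {N : ℕ} {f : Fin N → A}

theorem car_mul_self_eq_zero [Module ℂ A] (hCAR₁ : ∀ i j, f i * f j + f j * f i = 0)
    (i : Fin N) : f i * f i = 0 := by
  have h : (2 : ℂ) • (f i * f i) = 0 := by rw [two_smul]; exact hCAR₁ i i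
  exact (smul_eq_zero.mp h).resolve_left two_ne_zero

theorem car_star_mul_self_eq_zero [StarRing A] [Module ℂ A]
    (hCAR₁ : ∀ i j, f i * f j + f j * f i = 0) (i : Fin N) : star (f i) * star (f i) = 0 := by
  rw [← star_mul, car_mul_self_eq_zero hCAR₁, star_zero]

theorem car_anticomm_of_ne [StarRing A] (hCAR₁ : ∀ i j, f i * f j + f j * f i = 0)
    (hCAR₂ : ∀ i j, f i * star (f j) + star (f j) * f i = if i = j then 1 else 0)
    {i j : Fin N} (hij : i ≠ j) :
    ∀ g ∈ ({f i, star (f i)} : Set A), ∀ c ∈ ({f j, star (f j)} : Set A), g * c = -(c * g) := by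
  have hstar : star (f i) * star (f j) + star (f j) * star (f i) = 0 := by
    simpa only [star_add, star_mul, star_zero] using congrArg star (hCAR₁ j i)
  simp only [Set.mem_insert_iff, Set.mem_singleton_iff]
  rintro g (rfl | rfl) c (rfl | rfl) <;> refine eq_neg_of_add_eq_zero_left ?_
  · exact hCAR₁ i j
  · simpa [hij] using hCAR₂ i j
  · simpa [hij.symm, add_comm] using hCAR₂ j i
  · exact hstar

end CAR

theorem stmt_2_general {H : Type*} [NormedAddCommGroup H] [InnerProductSpace ℂ H]
    [FiniteDimensional ℂ H] {N : ℕ}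
    (f : Fin N → (H →ₗ[ℂ] H))
    (hCAR₁ : ∀ i j, f i * f j + f j * f i = 0)
    (hCAR₂ : ∀ i j, f i * adjoint (f j) + adjoint (f j) * f i
      = if i = j then 1 else 0)
    (hfull : Algebra.adjoin ℂ
      {A : H →ₗ[ℂ] H | ∃ i : Fin N, A = f i ∨ A = adjoint (f i)} = ⊤)
    (j : Fin N) (W : H →ₗ[ℂ] H) :
    ∃ O₀ O₁ O₂ O₃ : H →ₗ[ℂ] H,
      O₀ ∈ Algebra.adjoin ℂ
        {A : H →ₗ[ℂ] H | ∃ i : Fin N, i ≠ j ∧ (A = f i ∨ A = adjoint (f i))} ∧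
      O₁ ∈ Algebra.adjoin ℂ
        {A : H →ₗ[ℂ] H | ∃ i : Fin N, i ≠ j ∧ (A = f i ∨ A = adjoint (f i))} ∧
      O₂ ∈ Algebra.adjoin ℂ
        {A : H →ₗ[ℂ] H | ∃ i : Fin N, i ≠ j ∧ (A = f i ∨ A = adjoint (f i))} ∧
      O₃ ∈ Algebra.adjoin ℂ
        {A : H →ₗ[ℂ] H | ∃ i : Fin N, i ≠ j ∧ (A = f i ∨ A = adjoint (f i))} ∧
      W = O₀ + f j * O₁ + adjoint (f j) * O₂ + f j * adjoint (f j) * O₃ := by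
  set S := {A : H →ₗ[ℂ] H | ∃ i : Fin N, i ≠ j ∧ (A = f i ∨ A = adjoint (f i))}
  have hgen : {A : H →ₗ[ℂ] H | ∃ i : Fin N, A = f i ∨ A = adjoint (f i)} ⊆
      insert (f j) (insert (adjoint (f j)) S) := by
    rintro A ⟨i, hA⟩
    by_cases hij : i = j
    · subst hij; rcases hA with rfl | rfl <;> simp
    · exact Or.inr (Or.inr ⟨i, hij, hA⟩)
  have hW : W ∈ Algebra.adjoin ℂ (insert (f j) (insert (adjoint (f j)) S)) :=
    Algebra.adjoin_mono hgen (hfull ▸ Algebra.mem_top)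
  have had : f j * adjoint (f j) + adjoint (f j) * f j = 1 := by simpa using hCAR₂ j j
  have hS : ∀ g ∈ S, ∀ c ∈ ({f j, adjoint (f j)} : Set (H →ₗ[ℂ] H)), g * c = -(c * g) := by
    rintro g ⟨i, hij, hg⟩
    exact car_anticomm_of_ne hCAR₁ hCAR₂ hij g hg
  obtain ⟨O₀, h₀, O₁, h₁, O₂, h₂, O₃, h₃, hW⟩ := hasModeExpansion_of_mem_adjoin
    (car_mul_self_eq_zero hCAR₁ j) (car_star_mul_self_eq_zero hCAR₁ j) had hS hW
  exact ⟨O₀, O₁, O₂, O₃, h₀, h₁, h₂, h₃, hW⟩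

/-- Decomposition of a general operator relative to mode `j`, with coefficients
local on the complementary modes. -/
theorem stmt_2 {H : Type*} [NormedAddCommGroup H] [InnerProductSpace ℂ H]
    [FiniteDimensional ℂ H] [Nontrivial H] {N : ℕ}
    (f : Fin N → (H →ₗ[ℂ] H))
    (hCAR₁ : ∀ i j, f i * f j + f j * f i = 0)
    (hCAR₂ : ∀ i j, f i * adjoint (f j) + adjoint (f j) * f i
      = if i = j then 1 else 0)
    (hfull : Algebra.adjoin ℂ
      {A : H →ₗ[ℂ] H | ∃ i : Fin N, A = f i ∨ A = adjoint (f i)} = ⊤)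
    (j : Fin N) (W : H →ₗ[ℂ] H) :
    ∃ O₀ O₁ O₂ O₃ : H →ₗ[ℂ] H,
      O₀ ∈ Algebra.adjoin ℂ
        {A : H →ₗ[ℂ] H | ∃ i : Fin N, i ≠ j ∧ (A = f i ∨ A = adjoint (f i))} ∧
      O₁ ∈ Algebra.adjoin ℂ
        {A : H →ₗ[ℂ] H | ∃ i : Fin N, i ≠ j ∧ (A = f i ∨ A = adjoint (f i))} ∧
      O₂ ∈ Algebra.adjoin ℂ
        {A : H →ₗ[ℂ] H | ∃ i : Fin N, i ≠ j ∧ (A = f i ∨ A = adjoint (f i))} ∧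
      O₃ ∈ Algebra.adjoin ℂ
        {A : H →ₗ[ℂ] H | ∃ i : Fin N, i ≠ j ∧ (A = f i ∨ A = adjoint (f i))} ∧
      W = O₀ + f j * O₁ + adjoint (f j) * O₂ + f j * adjoint (f j) * O₃ :=
  stmt_2_general f hCAR₁ hCAR₂ hfull j W
end

section
/- Let f be a CAR family on H and assume f is full. Let U, V be unitaries on H such that Adjoint(U) * f i * U = Adjoint(V) * f i * V for every i : Fin N. Then there exists c : ℂ with ‖c‖ = 1 such that U = c • V. -/
/-! If `U⋆ a U = V⋆ a V` for every generator `a`, then `U V⋆` commutes with the generators, hence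
with the whole algebra they generate, which is all of `End H`. The centre of `End H` consists of
scalars, so `U V⋆ = c`, and `c` is a phase because `U V⋆` is unitary. -/

open LinearMap

theorem commute_mul_of_conj_eq {M : Type*} [Monoid M] {U U' V V' g : M}
    (hU : U * U' = 1) (hV : V * V' = 1) (h : U' * g * U = V' * g * V) :
    Commute (U * V') g :=
  calc U * V' * g = U * (V' * g * V) * V' := by simp only [mul_assoc, hV, mul_one]
    _ = U * (U' * g * U) * V' := by rw [h]
    _ = g * (U * V') := by simp only [← mul_assoc, hU, one_mul]

theorem star_conj_eq_of_conj_eq {M : Type*} [Monoid M] [StarMul M] {U V a : M}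
    (h : star U * a * U = star V * a * V) :
    star U * star a * U = star V * star a * V := by
  simpa only [star_mul, star_star, mul_assoc] using congrArg star h

theorem mem_unitary_of_algebraMap_mem_unitary {R A : Type*} [Field R] [StarRing R]
    [Ring A] [Nontrivial A] [StarRing A] [Algebra R A] [StarModule R A] {c : R}
    (h : algebraMap R A c ∈ unitary A) : c ∈ unitary R := by
  rw [Unitary.mem_iff_star_mul_self]
  apply (algebraMap R A).injective
  rw [map_mul, algebraMap_star_comm, map_one]
  exact Unitary.star_mul_self_of_mem h

theorem exists_norm_eq_one_smul_of_conj_eq {A : Type*} [Ring A] [Nontrivial A] [StarRing A]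
    [Algebra ℂ A] [StarModule ℂ A] [Algebra.IsCentral ℂ A] {s : Set A}
    (hs : Algebra.adjoin ℂ s = ⊤) {U V : A} (hU : U ∈ unitary A) (hV : V ∈ unitary A)
    (h : ∀ a ∈ s, star U * a * U = star V * a * V) :
    ∃ c : ℂ, ‖c‖ = 1 ∧ U = c • V := by
  have hcomm : ∀ b, Commute (U * star V) b := fun b =>
    Algebra.commute_of_mem_adjoin_of_forall_mem_commute (hs ▸ Algebra.mem_top) fun a ha =>
      commute_mul_of_conj_eq (Unitary.mul_star_self_of_mem hU)
        (Unitary.mul_star_self_of_mem hV) (h a ha)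
  have hcenter : U * star V ∈ Subalgebra.center ℂ A :=
    Subalgebra.mem_center_iff.mpr fun b => (hcomm b).symm.eq
  obtain ⟨c, hc⟩ := (Algebra.IsCentral.mem_center_iff ℂ).mp hcenter
  have hc_unitary : c ∈ unitary ℂ :=
    mem_unitary_of_algebraMap_mem_unitary (hc ▸ mul_mem hU (Unitary.star_mem hV))
  refine ⟨c, CStarRing.norm_of_mem_unitary hc_unitary, ?_⟩
  calc U = U * star V * V := by rw [mul_assoc, Unitary.star_mul_self_of_mem hV, mul_one]
    _ = c • V := by rw [hc, Algebra.smul_def]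

theorem stmt_3_general {H : Type*} [NormedAddCommGroup H] [InnerProductSpace ℂ H]
    [FiniteDimensional ℂ H] [Nontrivial H] {N : ℕ}
    (f : Fin N → (H →ₗ[ℂ] H))
    (hfull : Algebra.adjoin ℂ
      {A : H →ₗ[ℂ] H | ∃ i : Fin N, A = f i ∨ A = adjoint (f i)} = ⊤)
    (U V : H →ₗ[ℂ] H)
    (hU₁ : adjoint U * U = 1) (hU₂ : U * adjoint U = 1)
    (hV₁ : adjoint V * V = 1) (hV₂ : V * adjoint V = 1)
    (hdesc : ∀ i : Fin N, adjoint U * f i * U = adjoint V * f i * V) :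
    ∃ c : ℂ, ‖c‖ = 1 ∧ U = c • V := by
  simp only [← star_eq_adjoint] at hfull hU₁ hU₂ hV₁ hV₂ hdesc
  refine exists_norm_eq_one_smul_of_conj_eq hfull (Unitary.mem_iff.mpr ⟨hU₁, hU₂⟩)
    (Unitary.mem_iff.mpr ⟨hV₁, hV₂⟩) ?_
  rintro a ⟨i, rfl | rfl⟩
  · exact hdesc i
  · exact star_conj_eq_of_conj_eq (hdesc i)

/-- Theorem 1.5: the complete set of fermionic descriptors determines the
unitary uniquely up to a global phase. -/
theorem stmt_3 {H : Type*} [NormedAddCommGroup H] [InnerProductSpace ℂ H]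
    [FiniteDimensional ℂ H] [Nontrivial H] {N : ℕ}
    (f : Fin N → (H →ₗ[ℂ] H))
    (hCAR₁ : ∀ i j, f i * f j + f j * f i = 0)
    (hCAR₂ : ∀ i j, f i * adjoint (f j) + adjoint (f j) * f i
      = if i = j then 1 else 0)
    (hfull : Algebra.adjoin ℂ
      {A : H →ₗ[ℂ] H | ∃ i : Fin N, A = f i ∨ A = adjoint (f i)} = ⊤)
    (U V : H →ₗ[ℂ] H)
    (hU₁ : adjoint U * U = 1) (hU₂ : U * adjoint U = 1)
    (hV₁ : adjoint V * V = 1) (hV₂ : V * adjoint V = 1)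
    (hdesc : ∀ i : Fin N, adjoint U * f i * U = adjoint V * f i * V) :
    ∃ c : ℂ, ‖c‖ = 1 ∧ U = c • V :=
  stmt_3_general f hfull U V hU₁ hU₂ hV₁ hV₂ hdesc
end

section
/- Let f be a CAR family on H with parity operator P. Let I' be a set of indices in Fin N and let j : Fin N with j ∉ I'. If W is an operator with W ∈ Algebra.adjoin ℂ {f i, Adjoint(f i) : i ∈ I'} and W * P = P * W, then W * f j = f j * W; in particular, if W is moreover unitary, then Adjoint(W) * f j * W = f j. -/
/-!
Conjugation by the parity `P` flips the sign of each generator `f i`, `adjoint (f i)` with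
`i ∈ I'`, and each such generator anticommutes with `f j` by the CAR. Hence every generator `a`
satisfies `a * f j = f j * (P * a * P)`, and since `a ↦ P * a * P` is an algebra automorphism
this identity passes to the whole generated algebra. For `W` commuting with `P` it reads
`W * f j = f j * W`.
-/

open LinearMap

section TwistedCentralizer

variable (R : Type*) {A : Type*} [CommSemiring R] [Semiring A] [Algebra R A]

def twistedCentralizer (p x : A) (hp : p * p = 1) : Subalgebra R A where
  carrier := {a | a * x = x * (p * a * p)}
  mul_mem' {a b} (ha : a * x = x * (p * a * p)) (hb : b * x = x * (p * b * p)) := by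
    change a * b * x = x * (p * (a * b) * p)
    calc a * b * x = a * x * (p * b * p) := by rw [mul_assoc, hb, ← mul_assoc]
      _ = x * (p * a * (p * p) * b * p) := by rw [ha]; simp only [mul_assoc]
      _ = x * (p * (a * b) * p) := by rw [hp, mul_one]; simp only [mul_assoc]
  add_mem' {a b} (ha : a * x = x * (p * a * p)) (hb : b * x = x * (p * b * p)) := by
    change (a + b) * x = x * (p * (a + b) * p)
    rw [add_mul, ha, hb, mul_add, add_mul, mul_add]
  algebraMap_mem' r := by
    change algebraMap R A r * x = x * (p * algebraMap R A r * p)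
    rw [← Algebra.commutes r p, mul_assoc, hp, mul_one, Algebra.commutes]

variable {R}

theorem mem_twistedCentralizer {p x a : A} (hp : p * p = 1) :
    a ∈ twistedCentralizer R p x hp ↔ a * x = x * (p * a * p) :=
  Iff.rfl

theorem mem_twistedCentralizer_of_anticommute {A : Type*} [Ring A] [Algebra R A]
    {p x a : A} (hp : p * p = 1) (hpa : p * a = -(a * p)) (hax : a * x = -(x * a)) :
    a ∈ twistedCentralizer R p x hp := by
  rw [mem_twistedCentralizer, hpa, neg_mul, mul_assoc, hp, mul_one, mul_neg, hax]

end TwistedCentralizer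

theorem IsSelfAdjoint.mul_star_eq_neg {A : Type*} [Ring A] [StarRing A] {p a : A}
    (hp : IsSelfAdjoint p) (h : p * a = -(a * p)) : p * star a = -(star a * p) := by
  have h' := congrArg star h
  rw [star_mul, star_neg, star_mul, hp.star_eq] at h'
  rw [h', neg_neg]

theorem stmt_7_general {H : Type*} [NormedAddCommGroup H] [InnerProductSpace ℂ H]
    [FiniteDimensional ℂ H] {N : ℕ}
    (f : Fin N → (H →ₗ[ℂ] H))
    (hCAR₁ : ∀ i j, f i * f j + f j * f i = 0)
    (hCAR₂ : ∀ i j, f i * adjoint (f j) + adjoint (f j) * f i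
      = if i = j then 1 else 0)
    (P : H →ₗ[ℂ] H)
    (hPuni₁ : adjoint P * P = 1)
    (hPsq : P * P = 1)
    (hPanti : ∀ i, P * f i = -(f i * P))
    (I' : Set (Fin N)) (j : Fin N) (hj : j ∉ I')
    (W : H →ₗ[ℂ] H)
    (hWmem : W ∈ Algebra.adjoin ℂ
      {A : H →ₗ[ℂ] H | ∃ i ∈ I', A = f i ∨ A = adjoint (f i)})
    (hWP : W * P = P * W) :
    W * f j = f j * W ∧
      (adjoint W * W = 1 → W * adjoint W = 1 → adjoint W * f j * W = f j) := by
  have hPself : IsSelfAdjoint P := left_inv_eq_right_inv hPuni₁ hPsq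
  have hgen : {A : H →ₗ[ℂ] H | ∃ i ∈ I', A = f i ∨ A = adjoint (f i)} ⊆
      twistedCentralizer ℂ P (f j) hPsq := by
    rintro _ ⟨i, hi, rfl | rfl⟩
    · exact mem_twistedCentralizer_of_anticommute hPsq (hPanti i)
        (eq_neg_of_add_eq_zero_left (hCAR₁ i j))
    · have hij : j ≠ i := fun h => hj (h ▸ hi)
      exact mem_twistedCentralizer_of_anticommute hPsq (hPself.mul_star_eq_neg (hPanti i))
        (eq_neg_of_add_eq_zero_right (by simpa [hij] using hCAR₂ j i))
  have hcomm : W * f j = f j * W := by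
    have := (mem_twistedCentralizer hPsq).1 (Algebra.adjoin_le hgen hWmem)
    rwa [← hWP, mul_assoc, hPsq, mul_one] at this
  refine ⟨hcomm, fun hWW _ => ?_⟩
  rw [mul_assoc, ← hcomm, ← mul_assoc, hWW, one_mul]

/-- A parity-superselected operator local on a set of modes `I'` commutes with
the annihilation operator of any mode outside `I'`; in particular, if it is
unitary, it leaves that annihilation operator invariant under conjugation. -/
theorem stmt_7 {H : Type*} [NormedAddCommGroup H] [InnerProductSpace ℂ H]
    [FiniteDimensional ℂ H] [Nontrivial H] {N : ℕ}
    (f : Fin N → (H →ₗ[ℂ] H))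
    (hCAR₁ : ∀ i j, f i * f j + f j * f i = 0)
    (hCAR₂ : ∀ i j, f i * adjoint (f j) + adjoint (f j) * f i
      = if i = j then 1 else 0)
    (P : H →ₗ[ℂ] H)
    (hPuni₁ : adjoint P * P = 1) (hPuni₂ : P * adjoint P = 1)
    (hPsq : P * P = 1)
    (hPanti : ∀ i, P * f i = -(f i * P))
    (I' : Set (Fin N)) (j : Fin N) (hj : j ∉ I')
    (W : H →ₗ[ℂ] H)
    (hWmem : W ∈ Algebra.adjoin ℂ
      {A : H →ₗ[ℂ] H | ∃ i ∈ I', A = f i ∨ A = adjoint (f i)})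
    (hWP : W * P = P * W) :
    W * f j = f j * W ∧
      (adjoint W * W = 1 → W * adjoint W = 1 → adjoint W * f j * W = f j) :=
  stmt_7_general f hCAR₁ hCAR₂ P hPuni₁ hPsq hPanti I' j hj W hWmem hWP
end

section
/- For N : ℕ, define for each j : Fin N the matrix q j : Matrix ((Fin N) → (Fin 2)) ((Fin N) → (Fin 2)) ℂ by (q j) s t = if (s j = 0 ∧ t j = 1 ∧ ∀ k ≠ j, s k = t k) then 1 else 0. Then Algebra.adjoin ℂ ({q j : j : Fin N} ∪ {(q j)ᴴ : j : Fin N}) = ⊤, i.e. the operators q j together with their conjugate transposes generate the full matrix algebra of the N-qubit system. -/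
/-!
Write `|a⟩⟨b|_j` for the operator `|a⟩⟨b|` on qubit `j`. The generators give `|0⟩⟨1|_j` and
`|1⟩⟨0|_j`, and their products `|0⟩⟨0|_j`, `|1⟩⟨1|_j`. Operators on distinct qubits multiply
like a tensor product, so `∏ⱼ |s j⟩⟨t j|_j` is the matrix unit `|s⟩⟨t|`, and matrix units span
the whole matrix algebra.
-/

open Matrix

/-- The single-qubit lowering operator `|0⟩⟨1|` acting on the `j`-th qubit of an
`N`-qubit system (identity on the other qubits). -/
def qubitLower (N : ℕ) (j : Fin N) :
    Matrix (Fin N → Fin 2) (Fin N → Fin 2) ℂ := fun s t =>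
  if s j = 0 ∧ t j = 1 ∧ ∀ k, k ≠ j → s k = t k then 1 else 0

theorem Finset.eq_piecewise_of_piecewise_eq {ι α : Type*} [DecidableEq ι] {S : Finset ι}
    {s t u v : ι → α} (hv : ∀ j ∈ S, v j = t j) (hu : S.piecewise s v = u) :
    (∀ j ∈ S, u j = s j) ∧ S.piecewise t u = v := by
  subst hu
  refine ⟨fun j hj => S.piecewise_eq_of_mem _ _ hj, funext fun k => ?_⟩
  by_cases hk : k ∈ S <;> simp [hk, hv]

namespace PEquiv

variable {ι α : Type*} [DecidableEq ι] [DecidableEq α]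

/-- The matrix of this partial equivalence is `|s_S⟩⟨t_S| ⊗ 1`, where `s_S` is the restriction
of `s` to the sites in `S`. -/
def localSingle (S : Finset ι) (s t : ι → α) : (ι → α) ≃. (ι → α) where
  toFun u := if ∀ j ∈ S, u j = s j then some (S.piecewise t u) else none
  invFun v := if ∀ j ∈ S, v j = t j then some (S.piecewise s v) else none
  inv u v := by
    simp only [Option.ite_none_right_eq_some, Option.some.injEq]
    exact ⟨fun h => Finset.eq_piecewise_of_piecewise_eq h.1 h.2,
      fun h => Finset.eq_piecewise_of_piecewise_eq h.1 h.2⟩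

variable (S T : Finset ι) (s t r : ι → α)

theorem localSingle_apply_eq_some {u v : ι → α} :
    localSingle S s t u = some v ↔ (∀ j ∈ S, u j = s j) ∧ S.piecewise t u = v := by
  simp [localSingle]

@[simp] theorem symm_localSingle : (localSingle S s t).symm = localSingle S t s := rfl

theorem localSingle_trans_localSingle :
    (localSingle S s t).trans (localSingle S t r) = localSingle S s r := by
  ext u v
  simp only [trans_eq_some, localSingle_apply_eq_some]
  constructor
  · rintro ⟨w, ⟨hu, rfl⟩, -, rfl⟩
    exact ⟨hu, (Finset.piecewise_idem_right _ _ _ _).symm⟩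
  · rintro ⟨hu, rfl⟩
    exact ⟨_, ⟨hu, rfl⟩, fun j hj => Finset.piecewise_eq_of_mem _ _ _ hj,
      Finset.piecewise_idem_right _ _ _ _⟩

theorem localSingle_union (h : Disjoint S T) :
    localSingle (S ∪ T) s t = (localSingle S s t).trans (localSingle T s t) := by
  ext u v
  have hST : T.piecewise t (S.piecewise t u) = (S ∪ T).piecewise t u := by
    ext k
    by_cases hS : k ∈ S <;> by_cases hT : k ∈ T <;> simp [hS, hT]
  have hT : ∀ j ∈ T, S.piecewise t u j = u j := fun j hj =>
    S.piecewise_eq_of_notMem _ _ (Finset.disjoint_right.mp h hj)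
  simp only [trans_eq_some, localSingle_apply_eq_some, Finset.mem_union]
  constructor
  · rintro ⟨hu, rfl⟩
    exact ⟨_, ⟨fun j hj => hu j (.inl hj), rfl⟩,
      fun j hj => (hT j hj).trans (hu j (.inr hj)), hST⟩
  · rintro ⟨w, ⟨hu, rfl⟩, hw, rfl⟩
    refine ⟨fun j hj => ?_, hST.symm⟩
    rcases hj with hj | hj
    exacts [hu j hj, (hT j hj).symm.trans (hw j hj)]

theorem localSingle_empty : localSingle ∅ s t = PEquiv.refl (ι → α) := by
  ext u v
  simp [localSingle]

theorem localSingle_univ [Fintype ι] :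
    localSingle Finset.univ s t = PEquiv.single s t := by
  ext u v
  rw [localSingle_apply_eq_some, ← Option.mem_def, mem_single_iff]
  simp [funext_iff, eq_comm]

theorem conjTranspose_toMatrix {m n R : Type*} [DecidableEq m] [DecidableEq n]
    [NonAssocSemiring R] [StarRing R] (f : m ≃. n) :
    f.toMatrixᴴ = (f.symm.toMatrix : Matrix n m R) := by
  ext i j
  simp [apply_ite star, eq_some_iff]

theorem toMatrix_single {m n R : Type*} [DecidableEq m] [DecidableEq n] [Zero R] [One R]
    (a : m) (b : n) : (single a b).toMatrix = Matrix.single a b (1 : R) := by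
  ext i j
  simp only [toMatrix_apply, Matrix.single_apply, mem_single_iff, eq_comm]

end PEquiv

open PEquiv

section

variable {ι α R : Type*} [Fintype ι] [DecidableEq ι] [Fintype α] [DecidableEq α]
  [CommSemiring R] {A : Subalgebra R (Matrix (ι → α) (ι → α) R)}

theorem Subalgebra.toMatrix_localSingle_mem (h : ∀ j s t, (localSingle {j} s t).toMatrix ∈ A)
    (S : Finset ι) (s t : ι → α) : (localSingle S s t).toMatrix ∈ A := by
  induction S using Finset.induction_on with
  | empty =>
    rw [localSingle_empty, toMatrix_refl]
    exact one_mem A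
  | insert j S hj ih =>
    rw [Finset.insert_eq, localSingle_union _ _ _ _ (Finset.disjoint_singleton_left.mpr hj),
      toMatrix_trans]
    exact mul_mem (h j s t) ih

theorem Subalgebra.eq_top_of_toMatrix_localSingle_mem
    (h : ∀ j s t, (localSingle {j} s t).toMatrix ∈ A) : A = ⊤ := by
  refine eq_top_iff.mpr fun M _ => ?_
  rw [matrix_eq_sum_single M]
  refine sum_mem fun s _ => sum_mem fun t _ => ?_
  rw [← mul_one (M s t), ← smul_eq_mul, ← smul_single, ← toMatrix_single, ← localSingle_univ]
  exact A.smul_mem (Subalgebra.toMatrix_localSingle_mem h _ _ _) _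

end

theorem qubitLower_eq_toMatrix_localSingle {N : ℕ} {j : Fin N} {s t : Fin N → Fin 2}
    (hs : s j = 0) (ht : t j = 1) : qubitLower N j = (localSingle {j} s t).toMatrix := by
  ext u v
  simp only [qubitLower, toMatrix_apply, Option.mem_def, localSingle_apply_eq_some]
  simp [Finset.piecewise_singleton, eq_comm, Function.eq_update_iff, hs, ht]

theorem toMatrix_localSingle_mem_adjoin_qubitLower {N : ℕ} (j : Fin N) (s t : Fin N → Fin 2) :
    (localSingle {j} s t).toMatrix ∈ Algebra.adjoin ℂ
      ((Set.range fun j : Fin N => qubitLower N j) ∪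
        (Set.range fun j : Fin N => (qubitLower N j)ᴴ)) := by
  set A := Algebra.adjoin ℂ
      ((Set.range fun j : Fin N => qubitLower N j) ∪
        (Set.range fun j : Fin N => (qubitLower N j)ᴴ))
  have lower_mem {s t : Fin N → Fin 2} (hs : s j = 0) (ht : t j = 1) :
      (localSingle {j} s t).toMatrix ∈ A := by
    rw [← qubitLower_eq_toMatrix_localSingle hs ht]
    exact Algebra.subset_adjoin (.inl ⟨j, rfl⟩)
  have raise_mem {s t : Fin N → Fin 2} (hs : s j = 1) (ht : t j = 0) :
      (localSingle {j} s t).toMatrix ∈ A := by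
    rw [← symm_localSingle, ← conjTranspose_toMatrix, ← qubitLower_eq_toMatrix_localSingle ht hs]
    exact Algebra.subset_adjoin (.inr ⟨j, rfl⟩)
  match hs : s j, ht : t j with
  | 0, 1 => exact lower_mem hs ht
  | 1, 0 => exact raise_mem hs ht
  | 0, 0 =>
    rw [← localSingle_trans_localSingle {j} s (fun _ => 1) t, toMatrix_trans]
    exact mul_mem (lower_mem hs rfl) (raise_mem rfl ht)
  | 1, 1 =>
    rw [← localSingle_trans_localSingle {j} s (fun _ => 0) t, toMatrix_trans]
    exact mul_mem (raise_mem hs rfl) (lower_mem rfl ht)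

/-- Appendix Proposition: the operators `q j` together with their adjoints
`q j†` generate the full `N`-qubit operator algebra. -/
theorem stmt_8 (N : ℕ) :
    Algebra.adjoin ℂ
      ((Set.range fun j : Fin N => qubitLower N j) ∪
        (Set.range fun j : Fin N => (qubitLower N j)ᴴ)) = ⊤ :=
  Subalgebra.eq_top_of_toMatrix_localSingle_mem toMatrix_localSingle_mem_adjoin_qubitLower
end
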